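/- arXiv:1606.07734 — 9 statements merged into one kernel-verified Lean document; each statement's English description precedes it below -/
import Mathlib

section
/- The function u(r) = (an/(1 + (n/(n-2)) a^2 r^2))^((n-2)/2) satisfies the ODE u''(r) + ((n-1)/r) u'(r) + u(r)^((n+2)/(n-2)) = 0 for all r > 0, for any constants a > 0 and integer n > 2. -/
/-- The Aubin–Talenti ground state solves the critical equation. -/
theorem stmt0 (n a : ℝ) (hn : 2 < n) (ha : 0 < a)
    (u : ℝ → ℝ)
    (hu : ∀ r : ℝ, u r = (a * n / (1 + (n / (n - 2)) * a ^ 2 * r ^ 2)) ^ ((n - 2) / 2)) :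
    ∀ r : ℝ, 0 < r →
      deriv (deriv u) r + ((n - 1) / r) * deriv u r + u r ^ ((n + 2) / (n - 2)) = 0 := by
  intro r hr
  have hn2 : (0:ℝ) < n - 2 := by linarith
  have hn0 : (0:ℝ) < n := by linarith
  set p : ℝ := (n - 2) / 2 with hp
  set c : ℝ := n / (n - 2) * a ^ 2 with hc
  have hcpos : 0 < c := by positivity
  have han : 0 < a * n := mul_pos ha hn0
  set K : ℝ := (a * n) ^ p with hK
  have hB : ∀ x : ℝ, (0:ℝ) < 1 + c * x ^ 2 := fun x => by positivity
  have hufun : u = fun x => K * (1 + c * x ^ 2) ^ (-p) := by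
    funext x
    rw [hu x, Real.div_rpow han.le (hB x).le, Real.rpow_neg (hB x).le, div_eq_mul_inv]
  -- first derivative
  have hBder : ∀ x : ℝ, HasDerivAt (fun x : ℝ => 1 + c * x ^ 2) (2 * c * x) x := by
    intro x
    have h := ((hasDerivAt_pow 2 x).const_mul c).const_add 1
    refine h.congr_deriv ?_
    simp; ring
  have hu1 : ∀ x : ℝ, HasDerivAt u (K * (-p) * (2 * c) * (x * (1 + c * x ^ 2) ^ (-p - 1))) x := by
    intro x
    have h1 : HasDerivAt (fun x : ℝ => (1 + c * x ^ 2) ^ (-p))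
        ((2 * c * x) * (-p) * (1 + c * x ^ 2) ^ (-p - 1)) x :=
      (hBder x).rpow_const (Or.inl (hB x).ne')
    have h2 := h1.const_mul K
    rw [hufun]
    refine h2.congr_deriv ?_
    ring
  set g : ℝ → ℝ := fun x => K * (-p) * (2 * c) * (x * (1 + c * x ^ 2) ^ (-p - 1)) with hg
  have hdu : deriv u = g := funext fun x => (hu1 x).deriv
  have hg1 : HasDerivAt g
      (K * (-p) * (2 * c) * ((1 + c * r ^ 2) ^ (-p - 1)
        + r * ((2 * c * r) * (-p - 1) * (1 + c * r ^ 2) ^ (-p - 2)))) r := by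
    have h1 : HasDerivAt (fun x : ℝ => (1 + c * x ^ 2) ^ (-p - 1))
        ((2 * c * r) * (-p - 1) * (1 + c * r ^ 2) ^ (-p - 1 - 1)) r :=
      (hBder r).rpow_const (Or.inl (hB r).ne')
    have h2 := ((hasDerivAt_id r).mul h1).const_mul (K * (-p) * (2 * c))
    simp only [id_eq] at h2
    have h3 : -p - 1 - 1 = -p - 2 := by ring
    rw [h3] at h2
    refine h2.congr_deriv ?_
    ring
  have hdd : deriv (deriv u) r = K * (-p) * (2 * c) * ((1 + c * r ^ 2) ^ (-p - 1)
        + r * ((2 * c * r) * (-p - 1) * (1 + c * r ^ 2) ^ (-p - 2))) := by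
    rw [hdu]; exact hg1.deriv
  -- nonlinear term
  have hun : u r ^ ((n + 2) / (n - 2)) = K * (a * n) ^ 2 * (1 + c * r ^ 2) ^ (-p - 2) := by
    have hpos : 0 < a * n / (1 + c * r ^ 2) := div_pos han (hB r)
    rw [hu r, ← Real.rpow_natCast (a*n) 2]
    push_cast
    rw [← Real.rpow_mul hpos.le]
    have he : (n - 2) / 2 * ((n + 2) / (n - 2)) = (n + 2) / 2 := by
      field_simp
    rw [he, Real.div_rpow han.le (hB r).le, hK]
    rw [show (n + 2) / 2 = p + 2 by rw [hp]; ring, Real.rpow_add han,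
      show -p - 2 = -(p + 2) by ring, Real.rpow_neg (hB r).le, div_eq_mul_inv]
  -- rewrite B^(-p-1) = B * B^(-p-2)
  have hsplit : (1 + c * r ^ 2) ^ (-p - 1) = (1 + c * r ^ 2) * (1 + c * r ^ 2) ^ (-p - 2) := by
    rw [show -p - 1 = 1 + (-p - 2) by ring, Real.rpow_add (hB r), Real.rpow_one]
  rw [hdd, hun, hdu]
  simp only [hg]
  rw [hsplit]
  set X : ℝ := (1 + c * r ^ 2) ^ (-p - 2) with hX
  clear_value X
  clear_value K
  rw [hp, hc]
  field_simp
  ring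
end

section
/- The function u(r) = (a(n+α)/(1 + ((n+α)/(n-2)) a^2 r^(2+α)))^((n-2)/(2+α)) satisfies the ODE u''(r) + ((n-1)/r) u'(r) + r^α u(r)^((n+2+2α)/(n-2)) = 0 for all r > 0, for any a > 0, n > 2, and α > -2 with n + α > 0. -/
open Real Filter

/-- Explicit ground state for the critical equation with weight `r^α`. -/
theorem stmt3 (n α a : ℝ) (hn : 2 < n) (hα : -2 < α) (hnα : 0 < n + α) (ha : 0 < a)
    (u : ℝ → ℝ)
    (hu : ∀ r : ℝ, 0 < r → u r =
      (a * (n + α) / (1 + ((n + α) / (n - 2)) * a ^ 2 * r ^ (2 + α))) ^ ((n - 2) / (2 + α))) :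
    ∀ r : ℝ, 0 < r →
      deriv (deriv u) r + ((n - 1) / r) * deriv u r
        + r ^ α * u r ^ ((n + 2 + 2 * α) / (n - 2)) = 0 := by
  intro r hr
  have h2α : (2:ℝ) + α ≠ 0 := by linarith
  have hn2 : n - 2 ≠ 0 := by linarith
  have hr0 : r ≠ 0 := hr.ne'
  set C1 : ℝ := a * (n + α) with hC1
  set C2 : ℝ := (n + α) / (n - 2) * a ^ 2 with hC2
  set p : ℝ := (n - 2) / (2 + α) with hp
  have hC1pos : 0 < C1 := mul_pos ha hnα
  have hC2pos : 0 < C2 := mul_pos (div_pos hnα (by linarith)) (by positivity)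
  have hDpos : ∀ x : ℝ, 0 < x → 0 < 1 + C2 * x ^ (2+α) := by
    intro x hx
    have := Real.rpow_pos_of_pos hx (2+α)
    positivity
  have hD' : ∀ x : ℝ, 0 < x →
      HasDerivAt (fun y : ℝ => 1 + C2 * y ^ (2+α)) (C2 * ((2+α) * x ^ (1+α))) x := by
    intro x hx
    have h := ((Real.hasDerivAt_rpow_const (p := 2+α) (Or.inl hx.ne')).const_mul C2).const_add 1
    rwa [show (2:ℝ)+α-1 = 1+α by ring] at h
  have hu' : ∀ x : ℝ, 0 < x → HasDerivAt u
      (C1 ^ p * (C2 * ((2+α) * x ^ (1+α)) * -p * (1 + C2 * x ^ (2+α)) ^ (-p-1))) x := by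
    intro x hx
    have hg := (((hD' x hx).rpow_const (p := -p) (Or.inl (hDpos x hx).ne')).const_mul (C1 ^ p))
    apply hg.congr_of_eventuallyEq
    filter_upwards [isOpen_Ioi.mem_nhds (show x ∈ Set.Ioi (0:ℝ) from hx)] with y hy
    rw [hu y hy, Real.div_rpow hC1pos.le (hDpos y hy).le, Real.rpow_neg (hDpos y hy).le,
      div_eq_mul_inv]
  set K : ℝ := -(C1 ^ p * p * C2 * (2 + α)) with hK
  have hud : ∀ x : ℝ, 0 < x →
      HasDerivAt u (K * (x ^ (1+α) * (1 + C2 * x ^ (2+α)) ^ (-p-1))) x := by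
    intro x hx
    have h := hu' x hx
    convert h using 1
    rw [hK]; ring
  have hderiv1 : ∀ x : ℝ, 0 < x →
      deriv u x = K * (x ^ (1+α) * (1 + C2 * x ^ (2+α)) ^ (-p-1)) :=
    fun x hx => (hud x hx).deriv
  have hf1 : HasDerivAt (fun x : ℝ => K * (x ^ (1+α) * (1 + C2 * x ^ (2+α)) ^ (-p-1)))
      (K * (((1+α) * r ^ α) * (1 + C2 * r ^ (2+α)) ^ (-p-1)
        + r ^ (1+α) * (C2 * ((2+α) * r ^ (1+α)) * (-p-1) * (1 + C2 * r ^ (2+α)) ^ (-p-2)))) r := by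
    have h1 : HasDerivAt (fun x : ℝ => x ^ (1+α)) ((1+α) * r ^ α) r := by
      have h := Real.hasDerivAt_rpow_const (p := 1+α) (Or.inl hr0)
      rwa [show (1:ℝ)+α-1 = α by ring] at h
    have h2 : HasDerivAt (fun x : ℝ => (1 + C2 * x ^ (2+α)) ^ (-p-1))
        (C2 * ((2+α) * r ^ (1+α)) * (-p-1) * (1 + C2 * r ^ (2+α)) ^ (-p-2)) r := by
      have h := (hD' r hr).rpow_const (p := -p-1) (Or.inl (hDpos r hr).ne')
      rwa [show -p-1-1 = -p-2 by ring] at h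
    exact (h1.mul h2).const_mul K
  have hdd : HasDerivAt (deriv u)
      (K * (((1+α) * r ^ α) * (1 + C2 * r ^ (2+α)) ^ (-p-1)
        + r ^ (1+α) * (C2 * ((2+α) * r ^ (1+α)) * (-p-1) * (1 + C2 * r ^ (2+α)) ^ (-p-2)))) r := by
    apply hf1.congr_of_eventuallyEq
    filter_upwards [isOpen_Ioi.mem_nhds (show r ∈ Set.Ioi (0:ℝ) from hr)] with y hy
    exact hderiv1 y hy
  have hDr : 0 < 1 + C2 * r ^ (2+α) := hDpos r hr
  have hpq : p * ((n+2+2*α)/(n-2)) = p + 2 := by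
    rw [hp]; field_simp; ring
  have h3 : ((C1 / (1 + C2 * r ^ (2+α))) ^ p) ^ ((n+2+2*α)/(n-2))
      = C1 ^ p * C1 ^ 2 * (1 + C2 * r ^ (2+α)) ^ (-p-2) := by
    rw [← Real.rpow_mul (div_pos hC1pos hDr).le, hpq, Real.div_rpow hC1pos.le hDr.le,
      Real.rpow_add hC1pos, Real.rpow_two, show -p-2 = -(p+2) by ring,
      Real.rpow_neg hDr.le, div_eq_mul_inv, mul_assoc]
  rw [hdd.deriv, hderiv1 r hr, hu r hr, h3]
  have e1 : r ^ ((1:ℝ)+α) = r * r ^ α := by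
    rw [Real.rpow_add hr, Real.rpow_one]
  have e3 : (1 + C2 * r ^ (2+α)) ^ (-p-1)
      = (1 + C2 * r ^ (2+α)) ^ (-p-2) * (1 + C2 * r ^ (2+α)) := by
    rw [show -p-1 = (-p-2)+1 by ring, Real.rpow_add hDr, Real.rpow_one]
  have e5 : r ^ ((2:ℝ)+α) = r ^ 2 * r ^ α := by
    rw [Real.rpow_add hr, Real.rpow_two]
  rw [e1, e3, e5, hK, hC2, hC1, hp]
  field_simp
  ring
end

section
/- Let p > 1, n > 2 with p < (n+α)/(n-2), α > -2, and set a = (p-1)/(α - np + n + 2p). Then the function u(r) = ((an + aα + 1)/(1 + p a^2 r^(2+α)))^(1/(p-1)) is positive and satisfies u''(r) + ((n-1)/r) u'(r) + r^α (-u(r)^p + u(r)^(2p-1)) = 0 for all r > 0. -/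
/-- Explicit ground state for `u'' + ((n-1)/r)u' + r^α(-u^p + u^{2p-1}) = 0`. -/
theorem stmt4 (n α p a : ℝ) (hn : 2 < n) (hα : -2 < α)
    (hp1 : 1 < p) (hp2 : p < (n + α) / (n - 2))
    (hadef : a = (p - 1) / (α - n * p + n + 2 * p))
    (u : ℝ → ℝ)
    (hu : ∀ r : ℝ, 0 < r → u r =
      ((a * n + a * α + 1) / (1 + p * a ^ 2 * r ^ (2 + α))) ^ (1 / (p - 1))) :
    (∀ r : ℝ, 0 < r → 0 < u r) ∧
    ∀ r : ℝ, 0 < r →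
      deriv (deriv u) r + ((n - 1) / r) * deriv u r
        + r ^ α * (-(u r ^ p) + u r ^ (2 * p - 1)) = 0 := by
  set β := 2 + α with hβdef
  set m := 1 / (p - 1) with hmdef
  set K := p * a ^ 2 with hKdef
  set C := a * n + a * α + 1 with hCdef
  have hp0 : (0:ℝ) < p := by linarith
  have hp1' : (0:ℝ) < p - 1 := by linarith
  have hΔ : (0:ℝ) < α - n * p + n + 2 * p := by
    have hpn : p * (n - 2) < n + α :=
      (lt_div_iff₀ (by linarith : (0:ℝ) < n - 2)).mp hp2
    nlinarith
  have ha : 0 < a := by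
    rw [hadef]; exact div_pos (by linarith) hΔ
  have hK : 0 < K := by rw [hKdef]; positivity
  have hβ : 0 < β := by rw [hβdef]; linarith
  have hm : 0 < m := by rw [hmdef]; positivity
  have hnα : 0 < n + α := by nlinarith
  have hC : 0 < C := by rw [hCdef]; nlinarith
  -- the two key algebraic identities
  have hΔ' : α - n * p + n + 2 * p ≠ 0 := ne_of_gt hΔ
  have hp1ne : p - 1 ≠ 0 := ne_of_gt hp1'
  have hI1 : K * m * β * (m * β - (n - 2)) = C := by
    rw [hKdef, hCdef, hmdef, hβdef, hadef]
    field_simp [(by linarith : (0:ℝ) < α - p * n + n + p * 2).ne']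
    ring
  have hI2 : m * K * β * (β + n - 2) = C * (C - 1) := by
    rw [hKdef, hCdef, hmdef, hβdef, hadef]
    field_simp [(by linarith : (0:ℝ) < α - p * n + n + p * 2).ne']
    ring
  have hD : ∀ r : ℝ, 0 < r → 0 < 1 + K * r ^ β := by
    intro r hr; positivity
  set f : ℝ → ℝ := fun s => C ^ m * (1 + K * s ^ β) ^ (-m) with hfdef
  have huf : ∀ r : ℝ, 0 < r → u r = f r := by
    intro r hr
    have hfr' : f r = C ^ m * (1 + K * r ^ β) ^ (-m) := rfl
    rw [hu r hr, hfr', Real.div_rpow hC.le (hD r hr).le,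
      Real.rpow_neg (hD r hr).le, div_eq_mul_inv]
  have hpos : ∀ r : ℝ, 0 < r → 0 < u r := by
    intro r hr
    rw [huf r hr, hfdef]
    have := hD r hr
    positivity
  refine ⟨hpos, ?_⟩
  -- derivative of the base
  have hbase : ∀ r : ℝ, 0 < r →
      HasDerivAt (fun s : ℝ => 1 + K * s ^ β) (K * (β * r ^ (β - 1))) r := by
    intro r hr
    exact ((Real.hasDerivAt_rpow_const (Or.inl hr.ne')).const_mul K).const_add 1
  set v : ℝ → ℝ := fun s =>
    -(C ^ m * m * K * β) * ((1 + K * s ^ β) ^ (-m - 1) * s ^ (β - 1)) with hvdef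
  have hf' : ∀ r : ℝ, 0 < r → HasDerivAt f (v r) r := by
    intro r hr
    have h2 : HasDerivAt (fun x : ℝ => x ^ (-m)) (-m * (1 + K * r ^ β) ^ (-m - 1))
        (1 + K * r ^ β) := Real.hasDerivAt_rpow_const (Or.inl (hD r hr).ne')
    have h3 := (h2.comp r (hbase r hr)).const_mul (C ^ m)
    refine h3.congr_deriv ?_
    show _ = -(C ^ m * m * K * β) * ((1 + K * r ^ β) ^ (-m - 1) * r ^ (β - 1))
    ring
  have hud : ∀ r : ℝ, 0 < r → deriv u r = v r := by
    intro r hr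
    have heq : u =ᶠ[nhds r] f :=
      Filter.eventuallyEq_of_mem (isOpen_Ioi.mem_nhds hr) (fun s hs => huf s hs)
    rw [heq.deriv_eq, (hf' r hr).deriv]
  have hv' : ∀ r : ℝ, 0 < r → HasDerivAt v
      (-(C ^ m * m * K * β) *
        ((-m - 1) * (1 + K * r ^ β) ^ (-m - 1 - 1) * (K * (β * r ^ (β - 1))) * r ^ (β - 1)
          + (1 + K * r ^ β) ^ (-m - 1) * ((β - 1) * r ^ (β - 1 - 1)))) r := by
    intro r hr
    have h2 : HasDerivAt (fun x : ℝ => x ^ (-m - 1)) ((-m - 1) * (1 + K * r ^ β) ^ (-m - 1 - 1))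
        (1 + K * r ^ β) := Real.hasDerivAt_rpow_const (Or.inl (hD r hr).ne')
    have h4 : HasDerivAt (fun s : ℝ => s ^ (β - 1)) ((β - 1) * r ^ (β - 1 - 1)) r :=
      Real.hasDerivAt_rpow_const (Or.inl hr.ne')
    have h5 := ((h2.comp r (hbase r hr)).mul h4).const_mul (-(C ^ m * m * K * β))
    convert h5 using 2
    all_goals rfl
  intro r hr
  have hDr := hD r hr
  have heq2 : deriv u =ᶠ[nhds r] v :=
    Filter.eventuallyEq_of_mem (isOpen_Ioi.mem_nhds hr) (fun s hs => hud s hs)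
  have hudd : deriv (deriv u) r =
      -(C ^ m * m * K * β) *
        ((-m - 1) * (1 + K * r ^ β) ^ (-m - 1 - 1) * (K * (β * r ^ (β - 1))) * r ^ (β - 1)
          + (1 + K * r ^ β) ^ (-m - 1) * ((β - 1) * r ^ (β - 1 - 1))) := by
    rw [heq2.deriv_eq, (hv' r hr).deriv]
  -- power rewrites
  set D : ℝ := 1 + K * r ^ β with hDdef
  set R : ℝ := r ^ α with hRdef
  have hR : 0 < R := by rw [hRdef]; positivity
  have hrβ : r ^ β = r ^ (2:ℕ) * R := by
    rw [hRdef, hβdef, Real.rpow_add hr, ← Real.rpow_natCast r 2]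
    norm_num
  have hrβ1 : r ^ (β - 1) = r * R := by
    rw [hRdef, hβdef]
    have : 2 + α - 1 = 1 + α := by ring
    rw [this, Real.rpow_add hr, Real.rpow_one]
  have hrβ2 : r ^ (β - 1 - 1) = R := by
    rw [hRdef, hβdef]
    have : 2 + α - 1 - 1 = α := by ring
    rw [this]
  have hDm : D ^ (-m) = D ^ (-m - 2) * D ^ (2:ℕ) := by
    rw [← Real.rpow_natCast D 2, ← Real.rpow_add hDr]
    norm_num
  have hDm1 : D ^ (-m - 1) = D ^ (-m - 2) * D := by
    rw [show -m - 1 = -m - 2 + 1 by ring, Real.rpow_add hDr]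
    rw [Real.rpow_one]
  have hDm2 : D ^ (-m - 1 - 1) = D ^ (-m - 2) := by
    rw [show -m - 1 - 1 = -m - 2 by ring]
  -- powers of u
  have hmul1 : m * p = m + 1 := by rw [hmdef]; field_simp; ring
  have hmul2 : m * (2 * p - 1) = m + 2 := by rw [hmdef]; field_simp; ring
  have hfr : f r = C ^ m * D ^ (-m) := rfl
  have hup : u r ^ p = C ^ m * C * (D ^ (-m - 2) * D) := by
    rw [huf r hr, hfr, Real.mul_rpow (by positivity) (by positivity),
      ← Real.rpow_mul hC.le, ← Real.rpow_mul hDr.le]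
    have e2 : -m * p = -m - 1 := by linarith [hmul1]
    rw [hmul1, e2, hDm1, Real.rpow_add hC, Real.rpow_one]
  have hup2 : u r ^ (2 * p - 1) = C ^ m * C * C * D ^ (-m - 2) := by
    rw [huf r hr, hfr, Real.mul_rpow (by positivity) (by positivity)]
    rw [← Real.rpow_mul hC.le, ← Real.rpow_mul hDr.le]
    have e2 : -m * (2 * p - 1) = -m - 2 := by linarith [hmul2]
    rw [hmul2, e2, Real.rpow_add hC,
      show (2:ℝ) = ((2:ℕ):ℝ) by norm_num, Real.rpow_natCast]
    ring
  -- assemble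
  rw [hudd, hud r hr, hvdef]
  simp only
  rw [hup, hup2, hrβ1, hrβ2, hDm2, hDm1]
  set X : ℝ := D ^ (-m - 2) with hXdef
  have hdiv : (n - 1) / r * (-(C ^ m * m * K * β) * (X * D * (r * R))) =
      (n - 1) * (-(C ^ m * m * K * β) * (X * D * R)) := by
    field_simp
  rw [hdiv]
  rw [hDdef, hrβ]
  linear_combination (C ^ m * X * R * K * r ^ (2:ℕ) * R) * hI1 - (C ^ m * X * R) * hI2
end

section
/- Let p > (n+α)/(n-2) with n > 2 and α > -2, and set a = (p-1)/(np - n - 2p - α) > 0. Then the function u(r) = ((a(n+α) - 1)/(1 + p a^2 r^(2+α)))^(1/(p-1)) is positive and satisfies u''(r) + ((n-1)/r) u'(r) + r^α (u(r)^p + u(r)^(2p-1)) = 0 for all r > 0. -/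
/-- Explicit ground state of Lin–Ni type for `u'' + ((n-1)/r)u' + r^α(u^p + u^{2p-1}) = 0`. -/
theorem stmt5 (n α p a : ℝ) (hn : 2 < n) (hα : -2 < α)
    (hp : (n + α) / (n - 2) < p)
    (hadef : a = (p - 1) / (n * p - n - 2 * p - α))
    (u : ℝ → ℝ)
    (hu : ∀ r : ℝ, 0 < r → u r =
      ((a * (n + α) - 1) / (1 + p * a ^ 2 * r ^ (2 + α))) ^ (1 / (p - 1))) :
    0 < a ∧
    (∀ r : ℝ, 0 < r → 0 < u r) ∧
    ∀ r : ℝ, 0 < r →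
      deriv (deriv u) r + ((n - 1) / r) * deriv u r
        + r ^ α * (u r ^ p + u r ^ (2 * p - 1)) = 0 := by
  have hn2 : (0:ℝ) < n - 2 := by linarith
  have hq : (0:ℝ) < 2 + α := by linarith
  have hp1 : 1 < p := by
    have h1 : (1:ℝ) < (n + α) / (n - 2) := by rw [lt_div_iff₀ hn2]; linarith
    linarith
  have hD : 0 < n * p - n - 2 * p - α := by
    have h1 : n + α < p * (n - 2) := (div_lt_iff₀ hn2).mp hp
    nlinarith
  have ha : 0 < a := hadef ▸ div_pos (by linarith) hD
  have hpm1 : p - 1 ≠ 0 := by linarith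
  have hD' : n * p - n - 2 * p - α ≠ 0 := hD.ne'
  have hD2 : (p - 1) * n - p * 2 - α ≠ 0 := by intro h; apply hD'; linarith
  set m : ℝ := 1 / (p - 1) with hmdef
  have hm : 0 < m := div_pos one_pos (by linarith)
  have hmp : m * (p - 1) = 1 := by rw [hmdef]; field_simp
  set b : ℝ := p * a ^ 2 with hbdef
  have hb : 0 < b := mul_pos (by linarith) (pow_pos ha 2)
  set K : ℝ := a * (n + α) - 1 with hKdef
  have hK : 0 < K := by
    have hKeq : K = p * a * (2 + α) / (p - 1) := by
      rw [hKdef, hadef]; field_simp; ring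
    rw [hKeq]
    exact div_pos (mul_pos (mul_pos (by linarith) ha) hq) (by linarith)
  have key1 : K = m * b * (2 + α) * (n - 2 - m * (2 + α)) := by
    rw [hKdef, hmdef, hbdef, hadef]; field_simp; ring
  have key2 : K * K = m * (m + 1) * ((2 + α) * (2 + α)) * b := by
    rw [hKdef, hmdef, hbdef, hadef]; field_simp; ring
  clear_value m b K
  have huv : ∀ r : ℝ, 0 < r → u r = K ^ m * (1 + b * r ^ (2 + α)) ^ (-m) := by
    intro r hr
    have hS : (0:ℝ) < 1 + b * r ^ (2 + α) := by positivity
    rw [hu r hr, Real.div_rpow hK.le hS.le, Real.rpow_neg hS.le, div_eq_mul_inv]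
  have hw : ∀ r : ℝ, 0 < r → HasDerivAt (fun x : ℝ => K ^ m * (1 + b * x ^ (2 + α)) ^ (-m))
      (-(K ^ m * m * b * (2 + α)) * (r ^ (α + 1) * (1 + b * r ^ (2 + α)) ^ (-m - 1))) r := by
    intro r hr
    have hS : (0:ℝ) < 1 + b * r ^ (2 + α) := by positivity
    have h1 : HasDerivAt (fun x : ℝ => 1 + b * x ^ (2 + α)) (b * ((2 + α) * r ^ (2 + α - 1))) r :=
      ((Real.hasDerivAt_rpow_const (Or.inl hr.ne')).const_mul b).const_add 1
    have h2 := (h1.rpow_const (p := -m) (Or.inl hS.ne')).const_mul (K ^ m)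
    refine h2.congr_deriv ?_
    rw [show (2 + α - 1 : ℝ) = α + 1 by ring]
    ring
  have hw2 : ∀ r : ℝ, 0 < r → HasDerivAt
      (fun x : ℝ => -(K ^ m * m * b * (2 + α)) * (x ^ (α + 1) * (1 + b * x ^ (2 + α)) ^ (-m - 1)))
      (-(K ^ m * m * b * (2 + α)) * ((α + 1) * r ^ α * (1 + b * r ^ (2 + α)) ^ (-m - 1)
        + r ^ (α + 1) * (b * ((2 + α) * r ^ (α + 1)) * (-m - 1)
            * (1 + b * r ^ (2 + α)) ^ (-m - 2)))) r := by
    intro r hr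
    have hS : (0:ℝ) < 1 + b * r ^ (2 + α) := by positivity
    have hf : HasDerivAt (fun x : ℝ => x ^ (α + 1)) ((α + 1) * r ^ (α + 1 - 1)) r :=
      Real.hasDerivAt_rpow_const (Or.inl hr.ne')
    have h1 : HasDerivAt (fun x : ℝ => 1 + b * x ^ (2 + α)) (b * ((2 + α) * r ^ (2 + α - 1))) r :=
      ((Real.hasDerivAt_rpow_const (Or.inl hr.ne')).const_mul b).const_add 1
    have hg := h1.rpow_const (Or.inl hS.ne') (p := -m - 1)
    have h2 := (hf.mul hg).const_mul (-(K ^ m * m * b * (2 + α)))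
    refine h2.congr_deriv ?_
    rw [show (α + 1 - 1 : ℝ) = α by ring, show (2 + α - 1 : ℝ) = α + 1 by ring,
      show (-m - 1 - 1 : ℝ) = -m - 2 by ring]
  have hd1 : ∀ r : ℝ, 0 < r → deriv u r =
      -(K ^ m * m * b * (2 + α)) * (r ^ (α + 1) * (1 + b * r ^ (2 + α)) ^ (-m - 1)) := by
    intro r hr
    have heq : u =ᶠ[nhds r] (fun x : ℝ => K ^ m * (1 + b * x ^ (2 + α)) ^ (-m)) :=
      Filter.eventually_of_mem (Ioi_mem_nhds hr) (fun x hx => huv x hx)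
    rw [heq.deriv_eq, (hw r hr).deriv]
  refine ⟨ha, ?_, ?_⟩
  · intro r hr
    rw [hu r hr]
    exact Real.rpow_pos_of_pos (div_pos hK (by positivity)) _
  intro r hr
  have hS : (0:ℝ) < 1 + b * r ^ (2 + α) := by positivity
  have hd2 : deriv (deriv u) r =
      -(K ^ m * m * b * (2 + α)) * ((α + 1) * r ^ α * (1 + b * r ^ (2 + α)) ^ (-m - 1)
        + r ^ (α + 1) * (b * ((2 + α) * r ^ (α + 1)) * (-m - 1)
            * (1 + b * r ^ (2 + α)) ^ (-m - 2))) := by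
    have heq : deriv u =ᶠ[nhds r]
        (fun x : ℝ => -(K ^ m * m * b * (2 + α))
          * (x ^ (α + 1) * (1 + b * x ^ (2 + α)) ^ (-m - 1))) :=
      Filter.eventually_of_mem (Ioi_mem_nhds hr) (fun x hx => hd1 x hx)
    rw [heq.deriv_eq, (hw2 r hr).deriv]
  rw [hd2, hd1 r hr, huv r hr]
  have hKm : (0:ℝ) ≤ K ^ m := (Real.rpow_pos_of_pos hK m).le
  have hSm : (0:ℝ) ≤ (1 + b * r ^ (2 + α)) ^ (-m) := (Real.rpow_pos_of_pos hS (-m)).le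
  have eK2 : K ^ (m + 1 + 1) = K ^ m * (K * K) := by
    rw [Real.rpow_add hK, Real.rpow_add hK, Real.rpow_one]; ring
  have eK1 : K ^ (m + 1) = K ^ m * K := by
    rw [Real.rpow_add hK, Real.rpow_one]
  have eS0 : (1 + b * r ^ (2 + α)) ^ (-m - 2 + 1)
      = (1 + b * r ^ (2 + α)) ^ (-m - 2) * (1 + b * r ^ (2 + α)) := by
    rw [Real.rpow_add hS, Real.rpow_one]
  have eS1 : (1 + b * r ^ (2 + α)) ^ (-m - 1)
      = (1 + b * r ^ (2 + α)) ^ (-m - 2) * (1 + b * r ^ (2 + α)) := by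
    rw [show (-m - 1 : ℝ) = -m - 2 + 1 by ring, Real.rpow_add hS, Real.rpow_one]
  have er1 : r ^ (α + 1) = r ^ α * r := by rw [Real.rpow_add hr, Real.rpow_one]
  have er2 : r ^ (2 + α) = r ^ α * (r * r) := by
    rw [show (2 + α : ℝ) = α + 1 + 1 by ring, Real.rpow_add hr, Real.rpow_add hr, Real.rpow_one]
    ring
  rw [Real.mul_rpow hKm hSm, Real.mul_rpow hKm hSm,
    ← Real.rpow_mul hK.le, ← Real.rpow_mul hS.le, ← Real.rpow_mul hK.le, ← Real.rpow_mul hS.le,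
    show m * p = m + 1 by linear_combination hmp,
    show m * (2 * p - 1) = m + 1 + 1 by linear_combination 2 * hmp,
    show (-m) * p = -m - 2 + 1 by linear_combination -hmp,
    show (-m) * (2 * p - 1) = -m - 2 by linear_combination -2 * hmp,
    eK2, eK1, eS0, eS1, er1, er2]
  have hr' : r ≠ 0 := hr.ne'
  have expand : (n - 1) / r * (-(K ^ m * m * b * (2 + α)) *
      (r ^ α * r * ((1 + b * (r ^ α * (r * r))) ^ (-m - 2) * (1 + b * (r ^ α * (r * r))))))
      = (n - 1) * (-(K ^ m * m * b * (2 + α)) *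
      (r ^ α * ((1 + b * (r ^ α * (r * r))) ^ (-m - 2) * (1 + b * (r ^ α * (r * r)))))) := by
    field_simp
  rw [expand]
  linear_combination (K ^ m * r ^ α * (1 + b * (r ^ α * (r * r))) ^ (-m - 2)
      * (1 + b * (r ^ α * (r * r)))) * key1
    + (K ^ m * r ^ α * (1 + b * (r ^ α * (r * r))) ^ (-m - 2)) * key2
end

section
/- Let p > 1, n > p, and q = ((p-1)n + p)/(n - p) (the critical power). For any a > 0, the function u(r) = (a(n-p)/((n-p)/n + (p-1) a^{p/(p-1)} r^{p/(p-1)}))^{(n-p)/p} satisfies the first-order ansatz φ_p(u'(r)) = -a r u(r)^{n(p-1)/(n-p)} for all r > 0, where φ_p(z) = z|z|^{p-2}. -/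
/-- The explicit `p`-Laplace ground state satisfies the first-order ansatz. -/
theorem stmt10 (p n a q : ℝ) (hp : 1 < p) (hn : p < n) (ha : 0 < a)
    (hq : q = ((p - 1) * n + p) / (n - p))
    (φ : ℝ → ℝ) (hφ : ∀ z : ℝ, φ z = z * |z| ^ (p - 2))
    (u : ℝ → ℝ)
    (hu : ∀ r : ℝ, 0 < r → u r =
      (a * (n - p) / ((n - p) / n + (p - 1) * a ^ (p / (p - 1)) * r ^ (p / (p - 1))))
        ^ ((n - p) / p)) :
    ∀ r : ℝ, 0 < r →
      φ (deriv u r) = -(a * r * u r ^ (n * (p - 1) / (n - p))) := by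
  intro r hr
  have hp0 : (0:ℝ) < p := by linarith
  have hp1 : (0:ℝ) < p - 1 := by linarith
  have hnp : (0:ℝ) < n - p := by linarith
  have hn0 : (0:ℝ) < n := by linarith
  set α := p / (p - 1) with hα
  have hα1 : α - 1 = 1 / (p - 1) := by rw [hα]; field_simp; ring
  have hαpos : 0 < α := div_pos hp0 hp1
  set A := a * (n - p) with hA
  have hApos : 0 < A := mul_pos ha hnp
  set c := (n - p) / n with hc
  have hcpos : 0 < c := div_pos hnp hn0
  set b := (p - 1) * a ^ α with hb
  have hbpos : 0 < b := mul_pos hp1 (Real.rpow_pos_of_pos ha α)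
  set β := (n - p) / p with hβ
  have hβpos : 0 < β := div_pos hnp hp0
  set Dr := c + b * r ^ α with hDr
  have hDrpos : 0 < Dr := add_pos hcpos (mul_pos hbpos (Real.rpow_pos_of_pos hr α))
  -- derivative computation
  have h1 : HasDerivAt (fun s : ℝ => s ^ α) (α * r ^ (α - 1)) r :=
    Real.hasDerivAt_rpow_const (Or.inl hr.ne')
  have h2 : HasDerivAt (fun s : ℝ => c + b * s ^ α) (b * (α * r ^ (α - 1))) r :=
    ((h1.const_mul b).const_add c)
  have h3 : HasDerivAt (fun s : ℝ => A / (c + b * s ^ α))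
      ((0 * Dr - A * (b * (α * r ^ (α - 1)))) / Dr ^ 2) r :=
    (hasDerivAt_const r A).div h2 hDrpos.ne'
  have h4 : HasDerivAt (fun s : ℝ => (A / (c + b * s ^ α)) ^ β)
      ((0 * Dr - A * (b * (α * r ^ (α - 1)))) / Dr ^ 2 * β * (A / Dr) ^ (β - 1)) r :=
    h3.rpow_const (Or.inl (div_pos hApos hDrpos).ne')
  have hud : deriv u r =
      (0 * Dr - A * (b * (α * r ^ (α - 1)))) / Dr ^ 2 * β * (A / Dr) ^ (β - 1) := by
    have heq : u =ᶠ[nhds r] fun s : ℝ => (A / (c + b * s ^ α)) ^ β := by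
      filter_upwards [Ioi_mem_nhds hr] with s hs
      exact hu s hs
    rw [heq.deriv_eq, h4.deriv]
  set W := (n - p) * a ^ α * r ^ (α - 1) * A ^ β * Dr ^ (-(β + 1)) with hW
  clear_value α A c b β Dr W
  have hWpos : 0 < W := by
    rw [hW]
    apply mul_pos (mul_pos (mul_pos (mul_pos hnp (Real.rpow_pos_of_pos ha α))
      (Real.rpow_pos_of_pos hr _)) (Real.rpow_pos_of_pos hApos _))
      (Real.rpow_pos_of_pos hDrpos _)
  have hVW : deriv u r = -W := by
    rw [hud, hW]
    rw [Real.div_rpow hApos.le hDrpos.le]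
    rw [Real.rpow_neg hDrpos.le]
    have e1 : A * A ^ (β - 1) = A ^ β := by
      have h := Real.rpow_add hApos 1 (β - 1)
      rw [Real.rpow_one] at h
      rw [← h]; congr 1; ring
    have e2 : Dr ^ 2 * Dr ^ (β - 1) = Dr ^ (β + 1) := by
      have h2' : Dr ^ (2:ℝ) = Dr ^ (2:ℕ) := by
        rw [← Real.rpow_natCast Dr 2]; norm_num
      rw [← h2', ← Real.rpow_add hDrpos]; congr 1; ring
    have e3 : β * b * α = (n - p) * a ^ α := by
      rw [hβ, hb, hα]; field_simp
    have step : (0 * Dr - A * (b * (α * r ^ (α - 1)))) / Dr ^ 2 * β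
        * (A ^ (β - 1) / Dr ^ (β - 1))
        = -((β * b * α) * r ^ (α - 1) * (A * A ^ (β - 1))
            * (Dr ^ 2 * Dr ^ (β - 1))⁻¹) := by
      ring
    rw [step, e1, e2, e3]
  -- the key algebraic identity
  have key : W ^ (p - 1) = a * r * u r ^ (n * (p - 1) / (n - p)) := by
    rw [hu r hr, ← hDr, ← Real.rpow_mul (div_pos hApos hDrpos).le,
      Real.div_rpow hApos.le hDrpos.le]
    rw [hW]
    rw [Real.mul_rpow (by positivity) (by positivity),
        Real.mul_rpow (by positivity) (by positivity),
        Real.mul_rpow (by positivity) (by positivity),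
        Real.mul_rpow (by positivity) (by positivity)]
    rw [← Real.rpow_mul ha.le, ← Real.rpow_mul hr.le, ← Real.rpow_mul hApos.le,
        ← Real.rpow_mul hDrpos.le]
    have eα : α * (p - 1) = p := by rw [hα]; field_simp
    have eα1 : (α - 1) * (p - 1) = 1 := by rw [hα1]; field_simp
    have eD : -(β + 1) * (p - 1) = -(β * (n * (p - 1) / (n - p))) := by
      rw [hβ]; field_simp; ring
    have em : β * (n * (p - 1) / (n - p)) = β * (p - 1) + (p - 1) := by
      rw [hβ]; field_simp; ring
    have eA : A ^ (β * (n * (p - 1) / (n - p)))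
        = A ^ (β * (p - 1)) * ((n - p) ^ (p - 1) * a ^ (p - 1)) := by
      rw [em, Real.rpow_add hApos]
      congr 1
      rw [hA, Real.mul_rpow ha.le hnp.le]
      ring
    have eap : a ^ p = a * a ^ (p - 1) := by
      have h := Real.rpow_add ha 1 (p - 1)
      rw [Real.rpow_one] at h
      rw [← h]; congr 1; ring
    rw [eα, eα1, eD, Real.rpow_one, Real.rpow_neg hDrpos.le, eA, eap]
    field_simp
  -- conclude
  rw [hφ, hVW, abs_neg, abs_of_pos hWpos]
  have hW1 : W * W ^ (p - 2) = W ^ (p - 1) := by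
    have h := Real.rpow_add hWpos 1 (p - 2)
    rw [Real.rpow_one] at h
    rw [← h]; congr 1; ring
  calc -W * W ^ (p - 2) = -(W * W ^ (p - 2)) := by ring
    _ = -(W ^ (p - 1)) := by rw [hW1]
    _ = _ := by rw [key]
end

section
/- Let p > 1, n > p, q = ((p-1)n+p)/(n-p), and a > 0. The function u(r) = (a(n-p)/((n-p)/n + (p-1) a^{p/(p-1)} r^{p/(p-1)}))^{(n-p)/p} satisfies the radial p-Laplace equation (φ_p(u'(r)))' + ((n-1)/r) φ_p(u'(r)) + u(r)^q = 0 for all r > 0, where φ_p(z) = z|z|^{p-2}. -/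
open Real Filter Set

/-- The explicit ground state solves the critical radial `p`-Laplace equation. -/
theorem stmt11 (p n a q : ℝ) (hp : 1 < p) (hn : p < n) (ha : 0 < a)
    (hq : q = ((p - 1) * n + p) / (n - p))
    (φ : ℝ → ℝ) (hφ : ∀ z : ℝ, φ z = z * |z| ^ (p - 2))
    (u : ℝ → ℝ)
    (hu : ∀ r : ℝ, 0 < r → u r =
      (a * (n - p) / ((n - p) / n + (p - 1) * a ^ (p / (p - 1)) * r ^ (p / (p - 1))))
        ^ ((n - p) / p)) :
    ∀ r : ℝ, 0 < r →
      deriv (fun s => φ (deriv u s)) r + ((n - 1) / r) * φ (deriv u r) + u r ^ q = 0 := by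
  have hp1 : (0:ℝ) < p - 1 := by linarith
  have hnp : (0:ℝ) < n - p := by linarith
  have hn0 : (0:ℝ) < n := by linarith
  have hp0 : (0:ℝ) < p := by linarith
  set α := p / (p - 1) with hα
  set β := (n - p) / p with hβ
  set γ := (β + 1) * (p - 1) with hγ
  set b := (p - 1) * a ^ α with hb
  set c := (n - p) / n with hc
  set A := a * (n - p) with hA
  have hαpos : 0 < α := div_pos hp0 hp1
  have hbpos : 0 < b := mul_pos hp1 (rpow_pos_of_pos ha α)
  have hcpos : 0 < c := div_pos hnp hn0
  have hApos : 0 < A := mul_pos ha hnp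
  have hβpos : 0 < β := div_pos hnp hp0
  set D : ℝ → ℝ := fun s => c + b * s ^ α with hD
  have hDpos : ∀ s : ℝ, 0 < s → 0 < D s := fun s hs =>
    add_pos hcpos (mul_pos hbpos (rpow_pos_of_pos hs α))
  -- exponent identities
  have e1 : (α - 1) * (p - 1) = 1 := by rw [hα]; field_simp; ring
  have e2 : α * (p - 1) = p := by rw [hα]; field_simp
  have e3 : γ * α = n := by rw [hγ, hβ, hα]; field_simp; ring
  have e4 : β * q = γ + 1 := by
    rw [hγ, hβ, hq]; field_simp [hp0.ne', hnp.ne']; ring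
  -- formula for u
  have huf : ∀ s : ℝ, 0 < s → u s = A ^ β * D s ^ (-β) := by
    intro s hs
    rw [hu s hs, Real.rpow_neg (hDpos s hs).le, Real.div_rpow hApos.le (hDpos s hs).le,
      div_eq_mul_inv]
  -- derivative of D
  have hDd : ∀ s : ℝ, 0 < s → HasDerivAt D (b * (α * s ^ (α - 1))) s := by
    intro s hs
    exact ((Real.hasDerivAt_rpow_const (Or.inl hs.ne')).const_mul b).const_add c
  -- derivative of u
  have hud : ∀ s : ℝ, 0 < s →
      HasDerivAt u (A ^ β * (b * (α * s ^ (α - 1)) * -β * D s ^ (-β - 1))) s := by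
    intro s hs
    have hv : HasDerivAt (fun t => A ^ β * D t ^ (-β))
        (A ^ β * (b * (α * s ^ (α - 1)) * -β * D s ^ (-β - 1))) s :=
      (((hDd s hs).rpow_const (Or.inl (hDpos s hs).ne')).const_mul _)
    refine hv.congr_of_eventuallyEq ?_
    filter_upwards [isOpen_Ioi.mem_nhds hs] with t ht
    exact huf t ht
  set M := (A ^ β * (β * (b * α))) ^ (p - 1) with hM
  -- value of φ (deriv u s)
  have hφd : ∀ s : ℝ, 0 < s → φ (deriv u s) = -(M * (s * D s ^ (-γ))) := by
    intro s hs
    have hds : deriv u s = A ^ β * (b * (α * s ^ (α - 1)) * -β * D s ^ (-β - 1)) :=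
      (hud s hs).deriv
    set E := A ^ β * (β * (b * α)) * (s ^ (α - 1) * D s ^ (-β - 1)) with hE
    have hEpos : 0 < E :=
      mul_pos (mul_pos (rpow_pos_of_pos hApos β)
        (mul_pos hβpos (mul_pos hbpos hαpos)))
        (mul_pos (rpow_pos_of_pos hs _) (rpow_pos_of_pos (hDpos s hs) _))
    have hdE : deriv u s = -E := by rw [hds, hE]; ring
    rw [hφ, hdE, abs_neg, abs_of_pos hEpos]
    have h5 : E * E ^ (p - 2) = E ^ (p - 1) := by
      have h := Real.rpow_add hEpos 1 (p - 2)
      rw [Real.rpow_one] at h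
      rw [← h]
      congr 1; ring
    have h6 : E ^ (p - 1) = M * (s * D s ^ (-γ)) := by
      have hA1 : (s ^ (α - 1)) ^ (p - 1) = s := by
        rw [← Real.rpow_mul hs.le, e1, Real.rpow_one]
      have hA2 : (D s ^ (-β - 1)) ^ (p - 1) = D s ^ (-γ) := by
        rw [← Real.rpow_mul (hDpos s hs).le]
        congr 1
        rw [hγ]; ring
      rw [hE,
        Real.mul_rpow (by positivity)
          (mul_nonneg (Real.rpow_nonneg hs.le _) (Real.rpow_nonneg (hDpos s hs).le _)),
        Real.mul_rpow (Real.rpow_nonneg hs.le _) (Real.rpow_nonneg (hDpos s hs).le _),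
        hA1, hA2, hM]
    rw [← h6, ← h5]; ring
  -- the key constant identity
  have hkey : A ^ (γ + 1) = n * M * c := by
    have m1 : β * (b * α) = (n - p) * a ^ α := by
      rw [hβ, hb, hα]; field_simp
    have m2 : M = A ^ (β * (p - 1)) * ((n - p) ^ (p - 1) * a ^ p) := by
      rw [hM, m1, Real.mul_rpow (by positivity) (by positivity),
        Real.mul_rpow hnp.le (by positivity), ← Real.rpow_mul hApos.le,
        ← Real.rpow_mul ha.le, e2]
    have m3 : n * c = n - p := by rw [hc]; field_simp
    have m4 : (n - p) ^ (p - 1) * (n - p) = (n - p) ^ p := by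
      have h := Real.rpow_add_one hnp.ne' (p - 1)
      rw [show p - 1 + 1 = p by ring] at h
      exact h.symm
    have m5 : (n - p) ^ p * a ^ p = A ^ p := by
      rw [hA, Real.mul_rpow ha.le hnp.le]; ring
    have m6 : A ^ (β * (p - 1)) * A ^ p = A ^ (γ + 1) := by
      rw [← Real.rpow_add hApos]
      congr 1
      rw [hγ]; ring
    calc A ^ (γ + 1) = A ^ (β * (p - 1)) * A ^ p := m6.symm
      _ = A ^ (β * (p - 1)) * ((n - p) ^ p * a ^ p) := by rw [m5]
      _ = A ^ (β * (p - 1)) * (((n - p) ^ (p - 1) * (n - p)) * a ^ p) := by rw [m4]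
      _ = (n - p) * M := by rw [m2]; ring
      _ = n * M * c := by rw [← m3]; ring
  -- now the main computation at r
  intro r hr
  have hDr := hDpos r hr
  -- derivative of s ↦ φ (deriv u s)
  have hWd : HasDerivAt (fun s => -(M * (s * D s ^ (-γ))))
      (-(M * (1 * D r ^ (-γ) + r * (b * (α * r ^ (α - 1)) * -γ * D r ^ (-γ - 1))))) r := by
    exact (((hasDerivAt_id r).mul
      ((hDd r hr).rpow_const (Or.inl hDr.ne'))).const_mul M).neg
  have hderiv : deriv (fun s => φ (deriv u s)) r =
      -(M * (1 * D r ^ (-γ) + r * (b * (α * r ^ (α - 1)) * -γ * D r ^ (-γ - 1)))) := by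
    refine HasDerivAt.deriv (hWd.congr_of_eventuallyEq ?_)
    filter_upwards [isOpen_Ioi.mem_nhds hr] with t ht
    exact hφd t ht
  -- rewrite u r ^ q
  have huq : u r ^ q = A ^ (γ + 1) * D r ^ (-γ - 1) := by
    rw [huf r hr, Real.mul_rpow (by positivity) (by positivity),
      ← Real.rpow_mul hApos.le, ← Real.rpow_mul hDr.le, e4]
    congr 1
    rw [show -β * q = -(β * q) by ring, e4]; ring
  -- power splittings
  have hr1 : r ^ α = r * r ^ (α - 1) := by
    have h := Real.rpow_add hr 1 (α - 1)
    rw [Real.rpow_one] at h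
    rw [← h]; congr 1; ring
  have hD1 : D r ^ (-γ) = D r * D r ^ (-γ - 1) := by
    have h := Real.rpow_add hDr 1 (-γ - 1)
    rw [Real.rpow_one] at h
    rw [← h]; congr 1; ring
  have hDrv : D r = c + b * r ^ α := rfl
  have hmid : (n - 1) / r * -(M * (r * D r ^ (-γ))) = -((n - 1) * (M * D r ^ (-γ))) := by
    field_simp [hr.ne']
  rw [hderiv, hφd r hr, huq, hmid, hD1, hDrv]
  linear_combination ((c + b * r ^ α) ^ (-γ - 1)) * hkey +
    (M * b * (c + b * r ^ α) ^ (-γ - 1) * r ^ α) * e3 -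
    (M * γ * b * α * (c + b * r ^ α) ^ (-γ - 1)) * hr1
end

section
/- If p > 1, n > p, M > ((n p - n))/(n - p), Q = (Mp - p + 1)/(p - 1), and a = (M - p + 1)/(Mn - pn + n - Mp), then a > 0, an > 1, and the function u(r) = ((an - 1)/(1 + a^{p/(p-1)} M r^{p/(p-1)}))^{(p-1)/(M-p+1)} satisfies (φ_p(u'(r)))' + ((n-1)/r) φ_p(u'(r)) + u(r)^M + u(r)^Q = 0 for all r > 0, where φ_p(z) = z|z|^{p-2}. -/
/-- Explicit ground state of Lin–Ni type for the `p`-Laplacian. -/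
theorem stmt12 (p n M Q a : ℝ) (hp : 1 < p) (hn : p < n)
    (hM : (n * p - n) / (n - p) < M)
    (hQ : Q = (M * p - p + 1) / (p - 1))
    (hadef : a = (M - p + 1) / (M * n - p * n + n - M * p))
    (φ : ℝ → ℝ) (hφ : ∀ z : ℝ, φ z = z * |z| ^ (p - 2))
    (u : ℝ → ℝ)
    (hu : ∀ r : ℝ, 0 < r → u r =
      ((a * n - 1) / (1 + a ^ (p / (p - 1)) * M * r ^ (p / (p - 1))))
        ^ ((p - 1) / (M - p + 1))) :
    0 < a ∧ 1 < a * n ∧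
    ∀ r : ℝ, 0 < r →
      deriv (fun s => φ (deriv u s)) r + ((n - 1) / r) * φ (deriv u r)
        + u r ^ M + u r ^ Q = 0 := by
  have hp0 : (0:ℝ) < p - 1 := by linarith
  have hnp : (0:ℝ) < n - p := by linarith
  have hD : 0 < M * n - p * n + n - M * p := by
    have h := (div_lt_iff₀ hnp).mp hM
    nlinarith
  have hM1 : 0 < M - p + 1 := by nlinarith [(div_lt_iff₀ hnp).mp hM]
  have hMpos : 0 < M := by nlinarith
  have ha : 0 < a := by rw [hadef]; positivity
  have hc : a * n - 1 = M * p / (M * n - p * n + n - M * p) := by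
    rw [hadef, div_mul_eq_mul_div, div_sub_one hD.ne']; ring
  have hc0 : 0 < a * n - 1 := by rw [hc]; positivity
  have hp0' : p - 1 ≠ 0 := hp0.ne'
  have hM1' : M - p + 1 ≠ 0 := hM1.ne'
  have hD' : M * n - p * n + n - M * p ≠ 0 := hD.ne'
  refine ⟨ha, by linarith, ?_⟩
  -- derived constants
  set q := p / (p - 1) with hqdef
  set β := (p - 1) / (M - p + 1) with hβdef
  set c := a * n - 1 with hcdef
  set b := a ^ q * M with hbdef
  set s := β * M with hsdef
  have hq1 : 1 < q := by rw [hqdef, lt_div_iff₀ hp0]; linarith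
  have hβ0 : 0 < β := div_pos hp0 hM1
  have hb0 : 0 < b := mul_pos (Real.rpow_pos_of_pos ha q) hMpos
  have hs0 : 0 < s := mul_pos hβ0 hMpos
  have hqp : (q - 1) * (p - 1) = 1 := by rw [hqdef]; field_simp; ring
  have hsE : s = (β + 1) * (p - 1) := by rw [hsdef, hβdef]; field_simp; ring
  have hβ1 : β * (M - p + 1) = p - 1 := by rw [hβdef]; field_simp
  have hQ1 : Q * (p - 1) = M * p - p + 1 := by rw [hQ]; field_simp
  have hsQ : β * Q = s + 1 := by
    rw [hsdef]
    exact mul_right_cancel₀ hp0' (by linear_combination β * hQ1 + hβ1)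
  have hasq : a * s * q = c := by
    rw [hc, hsdef, hβdef, hqdef, hadef]; field_simp
  -- positivity of the denominator expression
  have hP : ∀ x : ℝ, 0 < x → 0 < 1 + b * x ^ q := fun x hx => by positivity
  -- u equals an explicit formula on (0,∞)
  have huv : ∀ x : ℝ, 0 < x → u x = c ^ β * (1 + b * x ^ q) ^ (-β) := fun x hx => by
    rw [hu x hx, Real.div_rpow hc0.le (hP x hx).le, Real.rpow_neg (hP x hx).le,
      div_eq_mul_inv]
  -- derivative of the inner function
  have hPd : ∀ x : ℝ, 0 < x →
      HasDerivAt (fun y : ℝ => 1 + b * y ^ q) (b * (q * x ^ (q - 1))) x := fun x hx => by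
    have h := (Real.hasDerivAt_rpow_const (x := x) (p := q) (Or.inl hx.ne')).const_mul b
    exact h.const_add 1
  have hvd : ∀ x : ℝ, 0 < x →
      HasDerivAt (fun y => c ^ β * (1 + b * y ^ q) ^ (-β))
        (c ^ β * (-β * (1 + b * x ^ q) ^ (-β - 1) * (b * (q * x ^ (q - 1))))) x :=
    fun x hx => by
      have h := ((hPd x hx).rpow_const (p := -β) (Or.inl (hP x hx).ne')).const_mul (c ^ β)
      refine h.congr_deriv ?_
      ring
  have hderivu : ∀ x : ℝ, 0 < x →
      deriv u x = c ^ β * (-β * (1 + b * x ^ q) ^ (-β - 1) * (b * (q * x ^ (q - 1)))) :=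
    fun x hx => by
      have hev : u =ᶠ[nhds x] fun y => c ^ β * (1 + b * y ^ q) ^ (-β) := by
        filter_upwards [eventually_gt_nhds hx] with y hy using huv y hy
      rw [hev.deriv_eq]; exact (hvd x hx).deriv
  -- key constant identity : (c^β * (β*(b*q)))^(p-1) = a * c^s
  have hβbq : β * (b * q) = a ^ (q - 1) * c := by
    have hsqc : s * q = c / a := by
      rw [eq_div_iff ha.ne']; linear_combination hasq
    calc β * (b * q) = a ^ q * (s * q) := by rw [hbdef, hsdef]; ring
      _ = a ^ q * (c / a) := by rw [hsqc]
      _ = a ^ (q - 1) * c := by rw [Real.rpow_sub ha, Real.rpow_one]; ring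
  have hApow : (c ^ β * (β * (b * q))) ^ (p - 1) = a * c ^ s := by
    rw [hβbq, Real.mul_rpow (Real.rpow_nonneg hc0.le _)
        (by positivity), Real.mul_rpow (Real.rpow_nonneg ha.le _) hc0.le,
      ← Real.rpow_mul hc0.le, ← Real.rpow_mul ha.le, hqp, Real.rpow_one]
    rw [hsE, show (β + 1) * (p - 1) = β * (p - 1) + (p - 1) by ring, Real.rpow_add hc0]
    ring
  -- φ (deriv u x) explicitly
  have hφu : ∀ x : ℝ, 0 < x →
      φ (deriv u x) = -(a * c ^ s * (x * (1 + b * x ^ q) ^ (-s))) := fun x hx => by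
    have hX := hP x hx
    have hEpos : 0 < c ^ β * (β * (b * q)) * (x ^ (q - 1) * (1 + b * x ^ q) ^ (-β - 1)) := by
      positivity
    have hEd : deriv u x
        = -(c ^ β * (β * (b * q)) * (x ^ (q - 1) * (1 + b * x ^ q) ^ (-β - 1))) := by
      rw [hderivu x hx]; ring
    rw [hφ, hEd, abs_neg, abs_of_pos hEpos]
    set E := c ^ β * (β * (b * q)) * (x ^ (q - 1) * (1 + b * x ^ q) ^ (-β - 1)) with hEdef
    have h1 : -E * E ^ (p - 2) = -(E ^ (p - 1)) := by
      rw [show p - 1 = 1 + (p - 2) by ring, Real.rpow_add hEpos, Real.rpow_one]; ring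
    rw [h1]
    have h2 : E ^ (p - 1) = a * c ^ s * (x * (1 + b * x ^ q) ^ (-s)) := by
      rw [hEdef, Real.mul_rpow (by positivity) (by positivity), hApow,
        Real.mul_rpow (by positivity) (by positivity),
        ← Real.rpow_mul hx.le, ← Real.rpow_mul hX.le, hqp, Real.rpow_one,
        show (-β - 1) * (p - 1) = -s by rw [hsE]; ring]
    rw [h2]
  -- main computation
  intro r hr
  have hX := hP r hr
  have hWd : HasDerivAt (fun y => -(a * c ^ s * (y * (1 + b * y ^ q) ^ (-s))))
      (-(a * c ^ s * (1 * (1 + b * r ^ q) ^ (-s)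
        + r * (-s * (1 + b * r ^ q) ^ (-s - 1) * (b * (q * r ^ (q - 1))))))) r := by
    have h2 := (hPd r hr).rpow_const (p := -s) (Or.inl hX.ne')
    have h3 := (((hasDerivAt_id r).mul h2).const_mul (a * c ^ s)).neg
    simp only [id_eq] at h3
    refine h3.congr_deriv ?_
    ring
  have hdφ : deriv (fun y => φ (deriv u y)) r
      = -(a * c ^ s * (1 * (1 + b * r ^ q) ^ (-s)
        + r * (-s * (1 + b * r ^ q) ^ (-s - 1) * (b * (q * r ^ (q - 1)))))) := by
    have hev : (fun y => φ (deriv u y))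
        =ᶠ[nhds r] fun y => -(a * c ^ s * (y * (1 + b * y ^ q) ^ (-s))) := by
      filter_upwards [eventually_gt_nhds hr] with y hy using hφu y hy
    rw [hev.deriv_eq]; exact hWd.deriv
  have huM : u r ^ M = c ^ s * (1 + b * r ^ q) ^ (-s) := by
    rw [huv r hr, Real.mul_rpow (Real.rpow_nonneg hc0.le _) (Real.rpow_nonneg hX.le _),
      ← Real.rpow_mul hc0.le, ← Real.rpow_mul hX.le, ← hsdef,
      show -β * M = -s by rw [hsdef]; ring]
  have huQ : u r ^ Q = c ^ s * c * (1 + b * r ^ q) ^ (-s - 1) := by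
    rw [huv r hr, Real.mul_rpow (Real.rpow_nonneg hc0.le _) (Real.rpow_nonneg hX.le _),
      ← Real.rpow_mul hc0.le, ← Real.rpow_mul hX.le, hsQ,
      show -β * Q = -s - 1 by linear_combination -hsQ,
      show (s + 1 : ℝ) = s + 1 from rfl, Real.rpow_add hc0, Real.rpow_one]
  have hXs : (1 + b * r ^ q) * (1 + b * r ^ q) ^ (-s - 1) = (1 + b * r ^ q) ^ (-s) := by
    nth_rewrite 1 [← Real.rpow_one (1 + b * r ^ q)]
    rw [← Real.rpow_add hX]
    norm_num
  have hrq : r * r ^ (q - 1) = r ^ q := by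
    nth_rewrite 1 [← Real.rpow_one r]
    rw [← Real.rpow_add hr]
    norm_num
  have hdiv : (n - 1) / r * φ (deriv u r) = -(a * c ^ s * ((n - 1) * (1 + b * r ^ q) ^ (-s))) := by
    rw [hφu r hr]; field_simp
  rw [hdφ, hdiv, huM, huQ]
  linear_combination (a * c ^ s * s * q * b * ((1 + b * r ^ q) ^ (-s - 1))) * hrq
    + (c ^ s * b * r ^ q * ((1 + b * r ^ q) ^ (-s - 1))) * hasq
    + (c ^ s * c) * hXs + (c ^ s * ((1 + b * r ^ q) ^ (-s))) * hcdef
end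

section
/- For any real a and α > -2, the function u(r) = a - 2 ln(1 + (e^a/(8(α/2+1)^2)) r^{α+2}) satisfies u''(r) + (1/r) u'(r) + r^α e^{u(r)} = 0 for all r > 0. -/
/-- Explicit Bratu-type solution with weight `r^α`. -/
theorem stmt17 (a α : ℝ) (hα : -2 < α)
    (u : ℝ → ℝ)
    (hu : ∀ r : ℝ, 0 < r → u r =
      a - 2 * Real.log (1 + (Real.exp a / (8 * (α / 2 + 1) ^ 2)) * r ^ (α + 2))) :
    ∀ r : ℝ, 0 < r →
      deriv (deriv u) r + (1 / r) * deriv u r + r ^ α * Real.exp (u r) = 0 := by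
  set c := Real.exp a / (8 * (α / 2 + 1) ^ 2) with hc_def
  have hβ : 0 < α + 2 := by linarith
  have h8 : (8 * (α / 2 + 1) ^ 2) = 2 * (α + 2) ^ 2 := by ring
  have hcpos : 0 < c := by
    rw [hc_def, h8]; positivity
  have hE : Real.exp a = 2 * c * (α + 2) ^ 2 := by
    rw [hc_def, h8]; field_simp
  have hDpos : ∀ x : ℝ, 0 < x → 0 < 1 + c * x ^ (α + 2) := by
    intro x hx
    have := Real.rpow_pos_of_pos hx (α + 2)
    positivity
  -- derivative of g(x) = 1 + c * x^(α+2)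
  have hg : ∀ x : ℝ, 0 < x →
      HasDerivAt (fun y : ℝ => 1 + c * y ^ (α + 2)) (c * ((α + 2) * x ^ (α + 1))) x := by
    intro x hx
    have h := (Real.hasDerivAt_rpow_const (p := α + 2) (Or.inl hx.ne')).const_mul c
    have : α + 2 - 1 = α + 1 := by ring
    rw [this] at h
    exact h.const_add 1
  -- first derivative of u
  have key : ∀ x : ℝ, 0 < x →
      HasDerivAt (fun y : ℝ => a - 2 * Real.log (1 + c * y ^ (α + 2)))
        (-(2 * (c * ((α + 2) * x ^ (α + 1)) / (1 + c * x ^ (α + 2))))) x := by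
    intro x hx
    exact (((hg x hx).log (hDpos x hx).ne').const_mul 2).const_sub a
  have hu' : ∀ x : ℝ, 0 < x →
      deriv u x = -(2 * (c * ((α + 2) * x ^ (α + 1)) / (1 + c * x ^ (α + 2)))) := by
    intro x hx
    have hev : u =ᶠ[nhds x] (fun y : ℝ => a - 2 * Real.log (1 + c * y ^ (α + 2))) :=
      Filter.eventually_of_mem (isOpen_Ioi.mem_nhds hx) (fun y hy => hu y hy)
    rw [hev.deriv_eq, (key x hx).deriv]
  intro r hr
  -- second derivative
  have hN : HasDerivAt (fun y : ℝ => c * ((α + 2) * y ^ (α + 1)))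
      (c * ((α + 2) * ((α + 1) * r ^ α))) r := by
    have h := ((Real.hasDerivAt_rpow_const (p := α + 1) (Or.inl hr.ne')).const_mul
      (α + 2)).const_mul c
    have : α + 1 - 1 = α := by ring
    rw [this] at h
    convert h using 1
  have hdiv := ((hN.div (hg r hr) (hDpos r hr).ne').const_mul 2).neg
  have hu'' : deriv (deriv u) r =
      -(2 * ((c * ((α + 2) * ((α + 1) * r ^ α)) * (1 + c * r ^ (α + 2)) -
        c * ((α + 2) * r ^ (α + 1)) * (c * ((α + 2) * r ^ (α + 1)))) /
        (1 + c * r ^ (α + 2)) ^ 2)) := by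
    have hev : deriv u =ᶠ[nhds r]
        (fun y : ℝ => -(2 * (c * ((α + 2) * y ^ (α + 1)) / (1 + c * y ^ (α + 2))))) :=
      Filter.eventually_of_mem (isOpen_Ioi.mem_nhds hr) (fun y hy => hu' y hy)
    rw [hev.deriv_eq]; exact hdiv.deriv
  -- exponential of u
  have hexp : Real.exp (u r) = Real.exp a / (1 + c * r ^ (α + 2)) ^ 2 := by
    rw [hu r hr, Real.exp_sub]
    congr 1
    rw [show (2 : ℝ) * Real.log (1 + c * r ^ (α + 2)) =
        Real.log ((1 + c * r ^ (α + 2)) ^ 2) by rw [Real.log_pow]; push_cast; ring,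
      Real.exp_log (by positivity)]
  rw [hu'' , hu' r hr, hexp]
  -- rpow algebra
  have h1 : r ^ (α + 1) = r ^ α * r := by
    rw [Real.rpow_add hr, Real.rpow_one]
  have h2 : r ^ (α + 2) = r ^ α * r * r := by
    rw [show α + 2 = (α + 1) + 1 by ring, Real.rpow_add hr, Real.rpow_one, h1]
  rw [h1, h2, hE]
  have hD : (0:ℝ) < 1 + c * (r ^ α * r * r) := by
    have := h2 ▸ hDpos r hr; linarith [hDpos r hr, h2 ▸ (hDpos r hr)]
  have hDne : (1 + c * (r ^ α * r * r)) ≠ 0 := by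
    have := hDpos r hr; rw [h2] at this; linarith
  field_simp
  ring
end

section
/- Let p > 1, α > -1, n be real, f continuous, and suppose u ∈ C²((0,b)) solves (φ_p(u'))' + ((n-1)/r) φ_p(u') + r^α f(u) = 0 on (0,b), where φ_p(z) = z|z|^{p-2}. Under the change of variables t = r^{1+α/p}/(1+α/p), the function v(t) = u(r(t)) solves (φ_p(v'))' + (m/t) φ_p(v') + f(v) = 0 on the corresponding t-interval, with m = (n - 1 + α - α/p)/(1 + α/p). -/
open Real Filter Set

/-- Change of variables `t = r^{1+α/p}/(1+α/p)` for the weighted radial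
`p`-Laplace equation, with new dimension parameter
`m = (n-1+α-α/p)/(1+α/p)`. -/
theorem stmt19 (p n α b : ℝ) (hp : 1 < p) (hα : -1 < α) (hb : 0 < b)
    (f : ℝ → ℝ) (hf : Continuous f)
    (φ : ℝ → ℝ) (hφ : ∀ z : ℝ, φ z = z * |z| ^ (p - 2))
    (u : ℝ → ℝ)
    (hreg : ∀ r ∈ Set.Ioo (0 : ℝ) b,
      DifferentiableAt ℝ u r ∧ DifferentiableAt ℝ (deriv u) r)
    (hode : ∀ r ∈ Set.Ioo (0 : ℝ) b,
      deriv (fun s => φ (deriv u s)) r + ((n - 1) / r) * φ (deriv u r)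
        + r ^ α * f (u r) = 0)
    (m : ℝ) (hm : m = (n - 1 + α - α / p) / (1 + α / p))
    (v : ℝ → ℝ)
    (hv : ∀ t : ℝ, 0 < t → v t = u (((1 + α / p) * t) ^ (1 / (1 + α / p)))) :
    ∀ t : ℝ, 0 < t → t < b ^ (1 + α / p) / (1 + α / p) →
      deriv (fun s => φ (deriv v s)) t + (m / t) * φ (deriv v t) + f (v t) = 0 := by
  intro t0 ht0 ht0b
  have hp0 : (0:ℝ) < p := by linarith
  set β : ℝ := 1 + α / p with hβdef
  have hβ : 0 < β := by
    have h1 : -1 < α / p := by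
      rw [lt_div_iff₀ hp0]; nlinarith
    simp only [hβdef]; linarith
  set γ : ℝ := (1/β - 1) * (p - 1) with hγdef
  set r0 : ℝ := (β * t0) ^ (1/β) with hr0def
  have hβt0 : 0 < β * t0 := mul_pos hβ ht0
  have hr0 : 0 < r0 := Real.rpow_pos_of_pos hβt0 _
  have hr0b : r0 < b := by
    have h1 : β * t0 < b ^ β := by
      rw [lt_div_iff₀ hβ] at ht0b; linarith [ht0b]
    calc r0 = (β*t0) ^ (1/β) := rfl
      _ < (b ^ β) ^ (1/β) := Real.rpow_lt_rpow hβt0.le h1 (by positivity)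
      _ = b := by rw [one_div, Real.rpow_rpow_inv hb.le hβ.ne']
  have hr0mem : r0 ∈ Set.Ioo (0:ℝ) b := ⟨hr0, hr0b⟩
  have hX : r0 ^ β = β * t0 := by
    rw [hr0def, one_div, Real.rpow_inv_rpow hβt0.le hβ.ne']
  -- derivative of the change of variables map R s = (β s)^{1/β}
  have hRd : ∀ s : ℝ, 0 < s → HasDerivAt (fun x => (β*x)^(1/β)) ((β*s)^(1/β-1)) s := by
    intro s hs
    have h1 : HasDerivAt (fun x : ℝ => β * x) β s := by
      simpa using (hasDerivAt_id s).const_mul β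
    have h2 : HasDerivAt (fun y : ℝ => y ^ (1/β)) ((1/β) * (β*s) ^ (1/β - 1)) (β*s) :=
      Real.hasDerivAt_rpow_const (Or.inl (mul_pos hβ hs).ne')
    have h3 := h2.comp s h1
    exact h3.congr_deriv (by rw [mul_comm (1/β), mul_assoc, one_div_mul_cancel hβ.ne', mul_one])
  -- scaling property of φ
  have hφs : ∀ c z : ℝ, 0 < c → φ (c * z) = c ^ (p-1) * φ z := by
    intro c z hc
    rw [hφ, hφ, abs_mul, abs_of_pos hc, Real.mul_rpow hc.le (abs_nonneg z)]
    rw [show p - 1 = 1 + (p-2) by ring, Real.rpow_add hc, Real.rpow_one]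
    ring
  -- derivative of v on a neighborhood
  have key : ∀ s : ℝ, 0 < s → ((β*s)^(1/β)) ∈ Set.Ioo (0:ℝ) b →
      HasDerivAt v (deriv u ((β*s)^(1/β)) * (β*s)^(1/β-1)) s := by
    intro s hs hRs
    have hu : HasDerivAt u (deriv u ((β*s)^(1/β))) ((β*s)^(1/β)) :=
      ((hreg _ hRs).1).hasDerivAt
    have hcomp := hu.comp s (hRd s hs)
    apply hcomp.congr_of_eventuallyEq
    filter_upwards [isOpen_Ioi.eventually_mem hs] with x hx
    exact hv x hx
  -- formula for φ (deriv v s)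
  have hφv : ∀ s : ℝ, 0 < s → ((β*s)^(1/β)) ∈ Set.Ioo (0:ℝ) b →
      φ (deriv v s) = (β*s)^γ * φ (deriv u ((β*s)^(1/β))) := by
    intro s hs hRs
    have hpos : (0:ℝ) < (β*s)^(1/β-1) := Real.rpow_pos_of_pos (mul_pos hβ hs) _
    rw [(key s hs hRs).deriv, mul_comm (deriv u _) _, hφs _ _ hpos,
      hγdef, Real.rpow_mul (mul_pos hβ hs).le]
  -- neighborhood facts
  have hnhds : ∀ᶠ s in nhds t0, 0 < s ∧ ((β*s)^(1/β)) ∈ Set.Ioo (0:ℝ) b := by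
    have h1 : ∀ᶠ s in nhds t0, 0 < s := isOpen_Ioi.eventually_mem ht0
    have hRc : ContinuousAt (fun s => (β*s)^(1/β)) t0 := (hRd t0 ht0).continuousAt
    have h2 : ∀ᶠ s in nhds t0, ((β*s)^(1/β)) ∈ Set.Ioo (0:ℝ) b :=
      hRc (Ioo_mem_nhds hr0 hr0b)
    exact h1.and h2
  have hEq : (fun s => φ (deriv v s)) =ᶠ[nhds t0]
      fun s => (β*s)^γ * φ (deriv u ((β*s)^(1/β))) := by
    filter_upwards [hnhds] with s hs
    exact hφv s hs.1 hs.2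
  have hD : deriv (fun s => φ (deriv v s)) t0
      = deriv (fun s => (β*s)^γ * φ (deriv u ((β*s)^(1/β)))) t0 := hEq.deriv_eq
  have hφvt0 : φ (deriv v t0) = (β*t0)^γ * φ (deriv u r0) := hφv t0 ht0 hr0mem
  have hvt0 : v t0 = u r0 := hv t0 ht0
  -- derivative of the weight g s = (β s)^γ
  have hg : HasDerivAt (fun s : ℝ => (β*s)^γ) (γ * (β*t0)^(γ-1) * β) t0 := by
    have h1 : HasDerivAt (fun x : ℝ => β * x) β t0 := by
      simpa using (hasDerivAt_id t0).const_mul β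
    have h2 : HasDerivAt (fun y : ℝ => y ^ γ) (γ * (β*t0) ^ (γ - 1)) (β*t0) :=
      Real.hasDerivAt_rpow_const (Or.inl hβt0.ne')
    exact h2.comp t0 h1
  -- exponent identities
  have hpα : (0:ℝ) < p + α := by nlinarith
  have hβγ : β * γ = β - 1 - α := by
    rw [hγdef, hβdef]; field_simp [hpα.ne']; ring
  have hmβ : m * β = n - 1 + α - α / p := by
    rw [hm, hβdef]; field_simp [hpα.ne']
  have hcoef : β * γ + m * β = n - 1 := by
    rw [hβγ, hmβ, hβdef]; ring
  have ht0eq : t0 = r0 ^ β / β := by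
    rw [hX]; field_simp
  by_cases hw : DifferentiableAt ℝ (fun r => φ (deriv u r)) r0
  · -- main case: w = φ ∘ deriv u is differentiable at r0
    have hwR : HasDerivAt (fun s => φ (deriv u ((β*s)^(1/β))))
        (deriv (fun r => φ (deriv u r)) r0 * (β*t0)^(1/β-1)) t0 :=
      HasDerivAt.comp (h₂ := fun r => φ (deriv u r)) (h := fun x => (β*x)^(1/β)) t0 (hw.hasDerivAt) (hRd t0 ht0)
    have hprod := hg.mul hwR
    have hDval : deriv (fun s => (β*s)^γ * φ (deriv u ((β*s)^(1/β)))) t0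
        = γ * (β*t0)^(γ-1) * β * φ (deriv u r0)
          + (β*t0)^γ * (deriv (fun r => φ (deriv u r)) r0 * (β*t0)^(1/β-1)) :=
      hprod.deriv
    set W := φ (deriv u r0) with hW
    set A := deriv (fun r => φ (deriv u r)) r0 with hA
    set F := f (u r0) with hF
    have hodeA : A + ((n-1)/r0) * W + r0^α * F = 0 := hode r0 hr0mem
    rw [hD, hDval, hφvt0, hvt0, ht0eq]
    have hsimp : β * (r0^β/β) = r0^β := by field_simp
    rw [hsimp]
    have hpow : ∀ c : ℝ, (r0^β)^c = r0^(β*c) := fun c => (Real.rpow_mul hr0.le β c).symm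
    rw [hpow, hpow, hpow]
    have e1 : β*(γ-1) = -1-α := by linear_combination hβγ
    have e2 : β*(1/β-1) = 1-β := by field_simp
    rw [e1, e2, hβγ]
    have f1 : r0^(-1-α : ℝ) = (r0 * r0^α)⁻¹ := by
      rw [show (-1-α : ℝ) = -(1+α) by ring, Real.rpow_neg hr0.le (1+α)]
      congr 1
      rw [Real.rpow_add hr0 1 α, Real.rpow_one]
    have f2 : r0^(β-1-α) = r0^β / (r0 * r0^α) := by
      rw [show β-1-α = β - (1+α) by ring, Real.rpow_sub hr0 β (1+α)]
      congr 1
      rw [Real.rpow_add hr0 1 α, Real.rpow_one]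
    have f3 : r0^(1-β) = r0 / r0^β := by rw [Real.rpow_sub hr0 1 β, Real.rpow_one]
    rw [f1, f2, f3]
    have hAval : A = -((n-1)/r0) * W - r0^α * F := by linarith [hodeA]
    rw [hAval]
    have hQ : r0^β ≠ 0 := (Real.rpow_pos_of_pos hr0 β).ne'
    have hE : r0^α ≠ 0 := (Real.rpow_pos_of_pos hr0 α).ne'
    rw [← hF]
    clear_value W A F
    clear_value r0 γ β
    field_simp
    linear_combination W * hcoef
  · -- degenerate case: w = φ ∘ deriv u not differentiable at r0
    -- then deriv u r0 = 0, so φ (deriv u r0) = 0 and f (u r0) = 0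
    have hz : deriv u r0 = 0 := by
      by_contra hz
      apply hw
      have hφfun : φ = fun z : ℝ => z * |z|^(p-2) := funext hφ
      have hφd : DifferentiableAt ℝ φ (deriv u r0) := by
        rw [hφfun]
        have habs : DifferentiableAt ℝ (fun z : ℝ => |z|^(p-2)) (deriv u r0) := by
          rcases lt_or_gt_of_ne hz with h | h
          · have heq : (fun z : ℝ => |z|^(p-2)) =ᶠ[nhds (deriv u r0)]
                fun z : ℝ => (-z)^(p-2) := by
              filter_upwards [isOpen_Iio.eventually_mem h] with x hx
              rw [abs_of_neg hx]
            rw [heq.differentiableAt_iff]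
            have h1 : DifferentiableAt ℝ (fun y : ℝ => y ^ (p-2)) (-(deriv u r0)) :=
              (Real.hasDerivAt_rpow_const (Or.inl (by simpa using h.ne : -(deriv u r0) ≠ 0))).differentiableAt
            exact h1.comp _ differentiableAt_id.neg
          · have heq : (fun z : ℝ => |z|^(p-2)) =ᶠ[nhds (deriv u r0)]
                fun z : ℝ => z^(p-2) := by
              filter_upwards [isOpen_Ioi.eventually_mem h] with x hx
              rw [abs_of_pos hx]
            rw [heq.differentiableAt_iff]
            exact (Real.hasDerivAt_rpow_const (Or.inl h.ne')).differentiableAt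
        exact differentiableAt_id.mul habs
      exact hφd.comp r0 (hreg r0 hr0mem).2
    have hW0 : φ (deriv u r0) = 0 := by rw [hφ, hz]; simp
    have hd0 : deriv (fun r => φ (deriv u r)) r0 = 0 :=
      deriv_zero_of_not_differentiableAt hw
    have hF0 : f (u r0) = 0 := by
      have h1 := hode r0 hr0mem
      rw [hd0, hW0] at h1
      have hra : (0:ℝ) < r0^α := Real.rpow_pos_of_pos hr0 α
      have : r0^α * f (u r0) = 0 := by linarith
      rcases mul_eq_zero.1 this with h | h
      · exact absurd h hra.ne'
      · exact h
    -- the transformed function is also not differentiable at t0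
    have hnd : ¬ DifferentiableAt ℝ
        (fun s => (β*s)^γ * φ (deriv u ((β*s)^(1/β)))) t0 := by
      intro hcon
      apply hw
      -- first, w ∘ R is differentiable at t0
      have hgd : DifferentiableAt ℝ (fun s : ℝ => (β*s)^γ) t0 := hg.differentiableAt
      have hgne : ((β*t0):ℝ)^γ ≠ 0 := (Real.rpow_pos_of_pos hβt0 γ).ne'
      have h1 : DifferentiableAt ℝ
          (fun s : ℝ => ((β*s)^γ)⁻¹ * ((β*s)^γ * φ (deriv u ((β*s)^(1/β))))) t0 :=
        (hgd.inv hgne).mul hcon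
      have h2 : DifferentiableAt ℝ (fun s : ℝ => φ (deriv u ((β*s)^(1/β)))) t0 := by
        have heq : (fun s : ℝ => ((β*s)^γ)⁻¹ * ((β*s)^γ * φ (deriv u ((β*s)^(1/β)))))
            =ᶠ[nhds t0] fun s : ℝ => φ (deriv u ((β*s)^(1/β))) := by
          filter_upwards [isOpen_Ioi.eventually_mem ht0] with x hx
          have : ((β*x):ℝ)^γ ≠ 0 := (Real.rpow_pos_of_pos (mul_pos hβ hx) γ).ne'
          field_simp
        rw [← heq.differentiableAt_iff]
        exact h1
      -- compose with T r = r^β/β to recover w near r0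
      have hT : DifferentiableAt ℝ (fun r : ℝ => r^β / β) r0 :=
        ((Real.hasDerivAt_rpow_const (p := β) (Or.inl hr0.ne')).differentiableAt).div_const β
      have hTr0 : r0^β / β = t0 := by rw [hX]; field_simp
      have h3 : DifferentiableAt ℝ
          (fun r : ℝ => φ (deriv u ((β*(r^β/β))^(1/β)))) r0 := by
        rw [← hTr0] at h2
        exact DifferentiableAt.comp (g := fun s => φ (deriv u ((β*s)^(1/β)))) (f := fun r : ℝ => r^β / β) r0 h2 hT
      have heq2 : (fun r : ℝ => φ (deriv u ((β*(r^β/β))^(1/β))))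
          =ᶠ[nhds r0] fun r : ℝ => φ (deriv u r) := by
        filter_upwards [isOpen_Ioi.eventually_mem hr0] with x hx
        have hx1 : β * (x^β/β) = x^β := by field_simp
        rw [hx1, one_div, Real.rpow_rpow_inv (le_of_lt hx) hβ.ne']
      rw [← heq2.differentiableAt_iff]
      exact h3
    have hDv0 : deriv (fun s => φ (deriv v s)) t0 = 0 := by
      rw [hD]
      exact deriv_zero_of_not_differentiableAt hnd
    rw [hDv0, hφvt0, hvt0, hW0, hF0]
    ring
end
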